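/- For every even k ≥ 0, the Sylvester–Hadamard matrix H_k has discrepancy exactly √(2^k) = 2^{k/2}: every x ∈ {±1}^{2^k} satisfies ‖H_k x‖_∞ ≥ 2^{k/2}, and the vector x♮_(k) achieves ‖H_k x♮_(k)‖_∞ = 2^{k/2}. -/

import Mathlib

open scoped Matrix

/-- Canonical identification `Fin 2ᵏ ⊕ Fin 2ᵏ ≃ Fin 2ᵏ⁺¹` (first summand = first half). -/
def sumEquiv (k : ℕ) : Fin (2 ^ k) ⊕ Fin (2 ^ k) ≃ Fin (2 ^ (k + 1)) :=
  finSumFinEquiv.trans (finCongr (by rw [pow_succ]; ring))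

/-- The Sylvester–Hadamard matrices: `H 0 = (1)` and
`H (k+1) = [[H k, H k], [H k, −H k]]` (a `2ᵏ × 2ᵏ` matrix with `±1` entries). -/
def sylvesterHadamard : (k : ℕ) → Matrix (Fin (2 ^ k)) (Fin (2 ^ k)) ℝ
  | 0 => fun _ _ => 1
  | k + 1 =>
    Matrix.reindex (sumEquiv k) (sumEquiv k)
      (Matrix.fromBlocks (sylvesterHadamard k) (sylvesterHadamard k)
        (sylvesterHadamard k) (-(sylvesterHadamard k)))

/-- Canonical identification `Fin 2² × Fin 2ᵏ ≃ Fin 2ᵏ⁺²` (first factor most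
significant), under which `H (k+2) = H 2 ⊗ H k` as a Kronecker product. -/
def prodEquiv (k : ℕ) : Fin (2 ^ 2) × Fin (2 ^ k) ≃ Fin (2 ^ (k + 2)) :=
  finProdFinEquiv.trans (finCongr (by rw [← pow_add, Nat.add_comm]))

/-- The vector `y = (1, 1, 1, −1)`. -/
def ySign : Fin (2 ^ 2) → ℝ := ![1, 1, 1, -1]

/-- The sign vectors `x♮`: `x♮ 0 = (1)`, `x♮ 1 = (1, 1)` and `x♮ (k+2) = y ⊗ x♮ k`
(Kronecker product of vectors, via the canonical identification `prodEquiv`). -/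
def xNat : (k : ℕ) → (Fin (2 ^ k) → ℝ)
  | 0 => fun _ => 1
  | 1 => fun _ => 1
  | k + 2 => fun i =>
      ySign ((prodEquiv k).symm i).1 * xNat k ((prodEquiv k).symm i).2

/-- `x` is a sign vector: all its entries are `±1`. -/
def IsSignVec {n : ℕ} (x : Fin n → ℝ) : Prop := ∀ i, x i = 1 ∨ x i = -1

/-!
Lower bound: the columns of `H k` are orthogonal, `(H k)ᵀ H k = 2ᵏ • 1`, so for a sign vector `x`
the Euclidean norm of `H k x` is `2ᵏ`; a vector with `2ᵏ` entries and Euclidean norm `2ᵏ` has an entry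
of absolute value at least `√(2ᵏ)`.

Upper bound: splitting vectors into halves, `H (k+1) (u, v) = (H k u + H k v, H k u - H k v)`, and
`x♮ (k+2) = ((z, z), (z, -z))` for `z = x♮ k`. Applying this twice gives
`H (k+2) x♮ (k+2) = 2 • ((w, w), (w, -w))` with `w = H k x♮ k` (in Kronecker form: `y` is an
eigenvector of `H 2` with eigenvalue `2`), so every two steps exactly double the sup norm.
-/

open Matrix

section SignVectors

variable {n : ℕ} {x : Fin n → ℝ}

theorem isSignVec_iff_mul_self : IsSignVec x ↔ ∀ i, x i * x i = 1 := by
  simp only [IsSignVec, mul_self_eq_one_iff]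

theorem IsSignVec.dotProduct_self (hx : IsSignVec x) : x ⬝ᵥ x = n := by
  simp [dotProduct, isSignVec_iff_mul_self.mp hx]

theorem IsSignVec.neg (hx : IsSignVec x) : IsSignVec (-x) :=
  fun i => (hx i).symm.imp (by simp [·]) (by simp [·])

end SignVectors

theorem dotProduct_self_le_card_mul_sq_norm {ι : Type*} [Fintype ι] (v : ι → ℝ) :
    v ⬝ᵥ v ≤ Fintype.card ι * ‖v‖ ^ 2 := by
  calc v ⬝ᵥ v = ∑ i, ‖v i‖ ^ 2 := by simp [dotProduct, sq]
    _ ≤ ∑ _i : ι, ‖v‖ ^ 2 := by gcongr with i; exact norm_le_pi_norm v i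
    _ = Fintype.card ι * ‖v‖ ^ 2 := by simp

theorem dotProduct_mulVec_self_of_transpose_mul_self {ι R : Type*} [Fintype ι] [DecidableEq ι]
    [CommRing R] {A : Matrix ι ι R} {c : R} (hA : Aᵀ * A = c • 1) (x : ι → R) :
    A *ᵥ x ⬝ᵥ A *ᵥ x = c * (x ⬝ᵥ x) := by
  rw [dotProduct_comm, dotProduct_mulVec, ← vecMul_transpose, vecMul_vecMul, hA, vecMul_smul,
    vecMul_one, smul_dotProduct, smul_eq_mul]

theorem sqrt_le_norm_mulVec_of_isSignVec {n : ℕ} {A : Matrix (Fin n) (Fin n) ℝ}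
    (hA : Aᵀ * A = (n : ℝ) • 1) {x : Fin n → ℝ} (hx : IsSignVec x) :
    Real.sqrt n ≤ ‖A *ᵥ x‖ := by
  have key := dotProduct_self_le_card_mul_sq_norm (A *ᵥ x)
  rw [dotProduct_mulVec_self_of_transpose_mul_self hA, hx.dotProduct_self,
    Fintype.card_fin] at key
  rcases (n.cast_nonneg (α := ℝ)).eq_or_lt with hn | hn
  · simp [← hn]
  · exact Real.sqrt_le_iff.mpr ⟨norm_nonneg _, le_of_mul_le_mul_left key hn⟩

section AppendHalves

variable {α : Type*} {k : ℕ}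

def appendHalves (u v : Fin (2 ^ k) → α) : Fin (2 ^ (k + 1)) → α :=
  Sum.elim u v ∘ (sumEquiv k).symm

@[simp]
theorem appendHalves_sumEquiv_inl (u v : Fin (2 ^ k) → α) (j : Fin (2 ^ k)) :
    appendHalves u v (sumEquiv k (.inl j)) = u j := by
  simp [appendHalves]

@[simp]
theorem appendHalves_sumEquiv_inr (u v : Fin (2 ^ k) → α) (j : Fin (2 ^ k)) :
    appendHalves u v (sumEquiv k (.inr j)) = v j := by
  simp [appendHalves]

theorem appendHalves_add [Add α] (u v u' v' : Fin (2 ^ k) → α) :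
    appendHalves u v + appendHalves u' v' = appendHalves (u + u') (v + v') := by
  ext i; obtain ⟨s | s, rfl⟩ := (sumEquiv k).surjective i <;> simp

theorem appendHalves_sub [Sub α] (u v u' v' : Fin (2 ^ k) → α) :
    appendHalves u v - appendHalves u' v' = appendHalves (u - u') (v - v') := by
  ext i; obtain ⟨s | s, rfl⟩ := (sumEquiv k).surjective i <;> simp

theorem smul_appendHalves {R : Type*} [SMul R α] (c : R) (u v : Fin (2 ^ k) → α) :
    c • appendHalves u v = appendHalves (c • u) (c • v) := by
  ext i; obtain ⟨s | s, rfl⟩ := (sumEquiv k).surjective i <;> simp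

theorem norm_appendHalves [SeminormedAddGroup α] (u v : Fin (2 ^ k) → α) :
    ‖appendHalves u v‖ = max ‖u‖ ‖v‖ := by
  refine le_antisymm ((pi_norm_le_iff_of_nonneg (by positivity)).mpr fun i => ?_) (max_le ?_ ?_)
  · obtain ⟨s | s, rfl⟩ := (sumEquiv k).surjective i
    · simpa using (norm_le_pi_norm u s).trans (le_max_left _ _)
    · simpa using (norm_le_pi_norm v s).trans (le_max_right _ _)
  · refine (pi_norm_le_iff_of_nonneg (norm_nonneg _)).mpr fun j => ?_
    simpa using norm_le_pi_norm (appendHalves u v) (sumEquiv k (.inl j))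
  · refine (pi_norm_le_iff_of_nonneg (norm_nonneg _)).mpr fun j => ?_
    simpa using norm_le_pi_norm (appendHalves u v) (sumEquiv k (.inr j))

theorem IsSignVec.appendHalves {u v : Fin (2 ^ k) → ℝ} (hu : IsSignVec u) (hv : IsSignVec v) :
    IsSignVec (appendHalves u v) := by
  intro i
  obtain ⟨s | s, rfl⟩ := (sumEquiv k).surjective i
  · simpa using hu s
  · simpa using hv s

end AppendHalves

theorem sylvesterHadamard_zero : sylvesterHadamard 0 = 1 := by
  ext i j
  obtain rfl : i = j := Fin.ext (by omega)
  simp [sylvesterHadamard]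

theorem sylvesterHadamard_transpose_mul_self (k : ℕ) :
    (sylvesterHadamard k)ᵀ * sylvesterHadamard k = (2 ^ k : ℝ) • 1 := by
  induction k with
  | zero => simp [sylvesterHadamard_zero]
  | succ k ih =>
    set I : Matrix (Fin (2 ^ k)) (Fin (2 ^ k)) ℝ := 1
    have hblocks : fromBlocks ((2 : ℝ) ^ (k + 1) • I) 0 0 ((2 : ℝ) ^ (k + 1) • I) =
        (2 : ℝ) ^ (k + 1) • 1 := by
      rw [← fromBlocks_one, fromBlocks_smul, smul_zero]
    rw [sylvesterHadamard, transpose_reindex, reindex_apply, reindex_apply, submatrix_mul_equiv,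
      fromBlocks_transpose, fromBlocks_multiply]
    simp only [transpose_neg, Matrix.mul_neg, Matrix.neg_mul, neg_neg, ih, add_neg_cancel,
      ← two_smul ℝ ((2 : ℝ) ^ k • I), smul_smul, ← pow_succ']
    rw [hblocks]
    exact congrArg ((2 : ℝ) ^ (k + 1) • ·) (submatrix_one_equiv (α := ℝ) (sumEquiv k).symm)

theorem sylvesterHadamard_succ_mulVec_appendHalves {k : ℕ} (u v : Fin (2 ^ k) → ℝ) :
    sylvesterHadamard (k + 1) *ᵥ appendHalves u v =
      appendHalves (sylvesterHadamard k *ᵥ u + sylvesterHadamard k *ᵥ v)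
        (sylvesterHadamard k *ᵥ u - sylvesterHadamard k *ᵥ v) := by
  rw [sylvesterHadamard, reindex_apply, submatrix_mulVec_equiv, appendHalves,
    Equiv.symm_symm, Function.comp_assoc, Equiv.symm_comp_self, Function.comp_id,
    fromBlocks_mulVec]
  simp [appendHalves, neg_mulVec, sub_eq_add_neg]

theorem xNat_add_two (k : ℕ) :
    xNat (k + 2) =
      appendHalves (appendHalves (xNat k) (xNat k)) (appendHalves (xNat k) (-xNat k)) := by
  have hval : ∀ (a : Fin (2 ^ 2)) (j : Fin (2 ^ k)) (i : Fin (2 ^ (k + 2))),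
      (i : ℕ) = j + 2 ^ k * a → xNat (k + 2) i = ySign a * xNat k j := by
    rintro a j i hi
    obtain rfl : i = prodEquiv k (a, j) := Fin.ext (by simp [prodEquiv, hi])
    simp [xNat]
  funext i
  obtain ⟨s, rfl⟩ := (sumEquiv (k + 1)).surjective i
  rcases s with p | p <;> obtain ⟨t, rfl⟩ := (sumEquiv k).surjective p <;> rcases t with j | j
  · rw [hval 0 j _ (by simp [sumEquiv])]; simp [ySign]
  · rw [hval 1 j _ (by simp [sumEquiv])]; simp [ySign]
  · rw [hval 2 j _ (by simp [sumEquiv, pow_succ])]; simp [ySign]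
  · rw [hval 3 j _ (by simp [sumEquiv, pow_succ]; omega)]; simp [ySign]

theorem isSignVec_xNat : ∀ k, IsSignVec (xNat k)
  | 0 => fun _ => .inl rfl
  | 1 => fun _ => .inl rfl
  | k + 2 => by
    have hx := isSignVec_xNat k
    rw [xNat_add_two]
    exact (hx.appendHalves hx).appendHalves (hx.appendHalves hx.neg)

theorem sylvesterHadamard_mulVec_xNat_add_two (k : ℕ) :
    sylvesterHadamard (k + 2) *ᵥ xNat (k + 2) =
      (2 : ℝ) • appendHalves
        (appendHalves (sylvesterHadamard k *ᵥ xNat k) (sylvesterHadamard k *ᵥ xNat k))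
        (appendHalves (sylvesterHadamard k *ᵥ xNat k) (-(sylvesterHadamard k *ᵥ xNat k))) := by
  rw [xNat_add_two, sylvesterHadamard_succ_mulVec_appendHalves,
    sylvesterHadamard_succ_mulVec_appendHalves, sylvesterHadamard_succ_mulVec_appendHalves]
  simp only [appendHalves_add, appendHalves_sub, smul_appendHalves, mulVec_neg]
  congr 2 <;> module

theorem norm_sylvesterHadamard_mulVec_xNat (m : ℕ) :
    ‖sylvesterHadamard (2 * m) *ᵥ xNat (2 * m)‖ = 2 ^ m := by
  induction m with
  | zero =>
    rw [Nat.mul_zero, sylvesterHadamard_zero, one_mulVec]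
    exact (pi_norm_const (1 : ℝ)).trans norm_one
  | succ m ih =>
    rw [Nat.mul_succ, sylvesterHadamard_mulVec_xNat_add_two, norm_smul, norm_appendHalves,
      norm_appendHalves, norm_appendHalves, norm_neg, max_self, max_self, ih, pow_succ',
      Real.norm_ofNat]

/-- For every even `k ≥ 0` the Sylvester–Hadamard matrix `H k` has discrepancy exactly
`√(2ᵏ) = 2^{k/2}`: every sign vector `x ∈ {±1}^{2ᵏ}` has `‖H k · x‖_∞ ≥ 2^{k/2}`, and
the sign vector `x♮ k` achieves `‖H k · x♮ k‖_∞ = 2^{k/2}`.  (The norm on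
`Fin n → ℝ` is the sup norm.) -/
theorem sylvesterHadamard_discrepancy_even (k : ℕ) (hk : Even k) :
    (∀ x : Fin (2 ^ k) → ℝ, IsSignVec x →
      (2 : ℝ) ^ (k / 2) ≤ ‖(sylvesterHadamard k).mulVec x‖) ∧
    IsSignVec (xNat k) ∧
    ‖(sylvesterHadamard k).mulVec (xNat k)‖ = 2 ^ (k / 2) ∧
    Real.sqrt (2 ^ k) = 2 ^ (k / 2) := by
  obtain ⟨m, hm⟩ := hk
  obtain rfl : k = 2 * m := by omega
  have hsqrt : Real.sqrt (2 ^ (2 * m)) = 2 ^ m := by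
    rw [pow_mul', Real.sqrt_sq (by positivity)]
  have hA : (sylvesterHadamard (2 * m))ᵀ * sylvesterHadamard (2 * m) =
      ((2 ^ (2 * m) : ℕ) : ℝ) • 1 := by
    exact_mod_cast sylvesterHadamard_transpose_mul_self (2 * m)
  rw [Nat.mul_div_cancel_left m two_pos]
  refine ⟨fun x hx => ?_, isSignVec_xNat _, norm_sylvesterHadamard_mulVec_xNat m, hsqrt⟩
  rw [← hsqrt]
  exact_mod_cast sqrt_le_norm_mulVec_of_isSignVec hA hx
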